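/- arXiv:math/0605673 — 4 statements merged into one kernel-verified Lean document; each statement's English description precedes it below -/
import Mathlib

section
/- Let C be a simplicial complex and let m = c_k(C) = C(n_k, k) + C(n_{k-1}, k-1) + ... + C(n_{k-s}, k-s) be the k-canonical representation of m (i.e., n_k > n_{k-1} > ... > n_{k-s} ≥ k-s > 0). Then c_{k+1}(C) ≤ C(n_k, k+1) + C(n_{k-1}, k) + ... + C(n_{k-s}, k-s+1). -/
/-!
Suppose `c_{k+1}(C)` exceeds `N = ∑ C(n_{k-i}, k-i+1)`. In colex order on `(k+1)`-subsets of
`Fin n`, the initial segment ending at `{0, …, k-s-1} ∪ {n_{k-s}, …, n_k}` has exactly `N + 1`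
members, and its shadow is the initial segment ending at the same set with `0` removed, which has
more than `c_k(C) = ∑ C(n_{k-i}, k-i)` members. Relabelling the vertices used by `C` into `Fin n`,
Kruskal–Katona bounds this from above by the shadow of the `(k+1)`-faces of `C`, which consists of
`k`-faces: a contradiction.
-/

open Finset
open scoped FinsetFamily

lemma Fin.image_univ_succ_eq_insert {β : Type*} [DecidableEq β] {r : ℕ} (h : Fin (r + 1) → β) :
    univ.image h = insert (h 0) (univ.image (h ∘ Fin.succ)) := by
  rw [Fin.univ_succ, cons_eq_insert, image_insert, map_eq_image, image_image]
  rfl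

namespace Finset.Colex

variable {α : Type*} [LinearOrder α] {s t : Finset α} {a : α}

lemma toColex_le_insert_iff_of_notMem (hs : ∀ x ∈ s, x < a) (ht : a ∉ t) :
    toColex t ≤ toColex (insert a s) ↔ ∀ x ∈ t, x < a := by
  refine ⟨fun h x hx ↦ ?_, fun h ↦ ?_⟩
  · refine (forall_le_mono h (fun y hy ↦ ?_) x hx).lt_of_ne (ne_of_mem_of_not_mem hx ht)
    obtain rfl | hy := mem_insert.1 hy
    exacts [le_rfl, (hs y hy).le]
  · exact (toColex_lt_toColex_iff_exists_forall_lt.2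
      ⟨a, mem_insert_self a s, ht, fun b hb _ ↦ h b hb⟩).le

lemma toColex_le_insert_iff_of_mem (hs : ∀ x ∈ s, x < a) (ht : a ∈ t) :
    toColex t ≤ toColex (insert a s) ↔ toColex (t.erase a) ≤ toColex s := by
  have has : a ∉ s := fun h ↦ (hs a h).false
  rw [← toColex_sdiff_le_toColex_sdiff (singleton_subset_iff.2 ht)
    (singleton_subset_iff.2 (mem_insert_self a s)), sdiff_singleton_eq_erase,
    sdiff_singleton_eq_erase, erase_insert has]

variable [Fintype α]

lemma notMem_of_mem_initSeg (hs : ∀ x ∈ s, x < a) (ht : t ∈ initSeg s) : a ∉ t :=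
  fun h ↦ (forall_lt_mono (mem_initSeg.1 ht).2 hs a h).false

lemma shadow_initSeg_union (hs : s.Nonempty) (hst : ∀ x ∈ s, ∀ y ∈ t, x < y) :
    ∂ (initSeg (s ∪ t)) = initSeg (s.erase (s.min' hs) ∪ t) := by
  have hmin : (s ∪ t).min' (hs.mono subset_union_left) = s.min' hs := by
    refine le_antisymm (min'_le _ _ (mem_union_left t (min'_mem s hs))) (le_min' _ _ _ ?_)
    intro y hy
    obtain hy | hy := mem_union.1 hy
    exacts [min'_le s y hy, (hst _ (min'_mem s hs) y hy).le]
  rw [shadow_initSeg (hs.mono subset_union_left), hmin, erase_union_distrib,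
    erase_eq_of_notMem fun h ↦ (hst _ (min'_mem s hs) _ h).false]

variable [LocallyFiniteOrderBot α]

lemma initSeg_Iio (a : α) : initSeg (Iio a) = {Iio a} := by
  ext t
  rw [mem_initSeg, mem_singleton]
  refine ⟨fun ⟨hcard, hle⟩ ↦ ?_, fun ht ↦ ⟨by rw [ht], by rw [ht]⟩⟩
  exact (eq_of_subset_of_card_le (fun x hx ↦ mem_Iio.2 <|
    forall_lt_mono hle (fun y hy ↦ mem_Iio.1 hy) x hx) hcard.le)

lemma card_initSeg_insert (hs : ∀ x ∈ s, x < a) :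
    #(initSeg (insert a s)) = (#(Iio a)).choose (#s + 1) + #(initSeg s) := by
  have has : a ∉ s := fun h ↦ (hs a h).false
  have hwithout : {t ∈ initSeg (insert a s) | a ∉ t} = (Iio a).powersetCard (#s + 1) := by
    ext t
    simp only [mem_filter, mem_initSeg, mem_powersetCard, card_insert_of_notMem has]
    constructor
    · rintro ⟨⟨hcard, hle⟩, hat⟩
      exact ⟨fun x hx ↦ mem_Iio.2 ((toColex_le_insert_iff_of_notMem hs hat).1 hle x hx),
        hcard.symm⟩
    · rintro ⟨hsub, hcard⟩
      have hlt : ∀ x ∈ t, x < a := fun x hx ↦ mem_Iio.1 (hsub hx)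
      exact ⟨⟨hcard.symm, (toColex_le_insert_iff_of_notMem hs fun h ↦ (hlt a h).false).2 hlt⟩,
        fun h ↦ (hlt a h).false⟩
  have hwith : #{t ∈ initSeg (insert a s) | a ∈ t} = #(initSeg s) := by
    refine card_nbij' (·.erase a) (insert a) ?_ ?_ ?_ ?_
    · intro t ht
      simp only [coe_filter, Set.mem_ofPred_eq, mem_initSeg, mem_coe] at ht ⊢
      obtain ⟨⟨hcard, hle⟩, hat⟩ := ht
      refine ⟨?_, (toColex_le_insert_iff_of_mem hs hat).1 hle⟩
      rw [card_erase_of_mem hat, ← hcard, card_insert_of_notMem has]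
      rfl
    · intro t ht
      have hat := notMem_of_mem_initSeg hs ht
      obtain ⟨hcard, hle⟩ := mem_initSeg.1 ht
      simp only [coe_filter, Set.mem_ofPred_eq, mem_initSeg]
      refine ⟨⟨?_, ?_⟩, mem_insert_self a t⟩
      · rw [card_insert_of_notMem has, card_insert_of_notMem hat, hcard]
      · rwa [toColex_le_insert_iff_of_mem hs (mem_insert_self a t), erase_insert hat]
    · intro t ht
      exact insert_erase (mem_filter.1 ht).2
    · intro t ht
      exact erase_insert (notMem_of_mem_initSeg hs ht)
  rw [← card_filter_add_card_filter_not (a ∈ ·), hwith, hwithout, card_powersetCard, add_comm]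

lemma card_initSeg_union_image {r : ℕ} {h : Fin r → α} (hh : StrictAnti h)
    (hsh : ∀ x ∈ s, ∀ i, x < h i) :
    #(initSeg (s ∪ univ.image h)) = #(initSeg s) + ∑ i, (#(Iio (h i))).choose (#s + r - i) := by
  induction r with
  | zero => simp
  | succ r ih =>
    have htail : StrictAnti (h ∘ Fin.succ) := hh.comp_strictMono Fin.strictMono_succ
    have hlt : ∀ x ∈ s ∪ univ.image (h ∘ Fin.succ), x < h 0 := by
      intro x hx
      obtain hx | hx := mem_union.1 hx
      · exact hsh x hx 0
      · obtain ⟨i, -, rfl⟩ := mem_image.1 hx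
        exact hh (Fin.succ_pos i)
    have hcard : #(s ∪ univ.image (h ∘ Fin.succ)) = #s + r := by
      rw [card_union_of_disjoint, card_image_of_injective _ htail.injective, card_univ,
        Fintype.card_fin]
      refine disjoint_left.2 fun x hx hxh ↦ ?_
      obtain ⟨i, -, rfl⟩ := mem_image.1 hxh
      exact (hsh _ hx i.succ).false
    rw [Fin.image_univ_succ_eq_insert, union_insert, card_initSeg_insert hlt, hcard,
      ih htail fun x hx i ↦ hsh x hx i.succ, Fin.sum_univ_succ]
    simp only [Function.comp_apply, Fin.val_zero, Fin.val_succ, Nat.sub_zero,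
      Nat.add_sub_add_right, ← add_assoc]
    ring

end Finset.Colex

section

variable {α β : Type*} [DecidableEq α] [DecidableEq β]

lemma Finset.map_shadow (e : α ↪ β) (𝒜 : Finset (Finset α)) :
    (∂ 𝒜).map (mapEmbedding e).toEmbedding = ∂ (𝒜.map (mapEmbedding e).toEmbedding) := by
  ext t
  simp only [mem_map, mem_shadow_iff, RelEmbedding.coe_toEmbedding, mapEmbedding_apply]
  constructor
  · rintro ⟨_, ⟨s, hs, a, ha, rfl⟩, rfl⟩
    exact ⟨s.map e, ⟨s, hs, rfl⟩, e a, mem_map_of_mem e ha, (map_erase e s a).symm⟩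
  · rintro ⟨_, ⟨s, hs, rfl⟩, b, hb, rfl⟩
    obtain ⟨a, ha, rfl⟩ := mem_map.1 hb
    exact ⟨s.erase a, ⟨s, hs, a, ha, rfl⟩, map_erase e s a⟩

lemma IsLowerSet.shadow_slice_subset {𝒜 : Finset (Finset α)}
    (h𝒜 : IsLowerSet (𝒜 : Set (Finset α))) (k : ℕ) : ∂ (𝒜 # (k + 1)) ⊆ 𝒜 # k := by
  intro t ht
  obtain ⟨s, hs, a, ha, rfl⟩ := mem_shadow_iff.1 ht
  obtain ⟨hs𝒜, hcard⟩ := mem_slice.1 hs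
  exact mem_slice.2 ⟨h𝒜 (erase_subset a s) hs𝒜, by rw [card_erase_of_mem ha, hcard]; rfl⟩

theorem Finset.kruskal_katona_of_subset {W : Finset α} {ℬ : Finset (Finset α)} {r n : ℕ}
    (hℬW : ∀ t ∈ ℬ, t ⊆ W) (hWn : #W ≤ n) (hℬ : (ℬ : Set (Finset α)).Sized r)
    {𝒞 : Finset (Finset (Fin n))} (h𝒞 : Colex.IsInitSeg 𝒞 r) (h𝒞ℬ : #𝒞 ≤ #ℬ) :
    #(∂ 𝒞) ≤ #(∂ ℬ) := by
  let ι : W ↪ α := Function.Embedding.subtype _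
  let e : W ↪ Fin n := W.equivFin.toEmbedding.trans (Fin.castLEEmb hWn)
  set ℬ' : Finset (Finset W) := ℬ.image (·.subtype (· ∈ W))
  have hℬ' : ℬ'.map (mapEmbedding ι).toEmbedding = ℬ := by
    rw [map_eq_image, image_image]
    conv_rhs => rw [← image_id (s := ℬ)]
    exact image_congr fun t ht ↦ subtype_map_of_mem (hℬW t ht)
  set 𝒜 : Finset (Finset (Fin n)) := ℬ'.map (mapEmbedding e).toEmbedding
  have hsized : (𝒜 : Set (Finset (Fin n))).Sized r := by
    intro a ha
    obtain ⟨t, ht, rfl⟩ := mem_map.1 (mem_coe.1 ha)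
    rw [RelEmbedding.coe_toEmbedding, mapEmbedding_apply, card_map,
      ← card_map ι, ← mapEmbedding_apply]
    exact hℬ (hℬ' ▸ mem_map_of_mem _ ht)
  have hcard : #𝒜 = #ℬ := by
    rw [card_map, ← hℬ', card_map]
  have hshadow : #(∂ 𝒜) = #(∂ ℬ) := by
    rw [← map_shadow, card_map, ← hℬ', ← map_shadow, card_map]
  exact hshadow ▸ kruskal_katona hsized (hcard ▸ h𝒞ℬ) h𝒞

end

open Finset.Colex in
theorem exists_isInitSeg_card_shadow {k s n : ℕ} {f : Fin (s + 1) → ℕ} (hsk : s < k)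
    (hf : StrictAnti f) (hlast : k - s ≤ f (Fin.last s)) (hn : f 0 < n) :
    ∃ 𝒞 : Finset (Finset (Fin n)), IsInitSeg 𝒞 (k + 1) ∧
      #𝒞 = ∑ i, (f i).choose (k - i + 1) + 1 ∧ ∑ i, (f i).choose (k - i) < #(∂ 𝒞) := by
  have hfn : ∀ i, f i < n := fun i ↦ (hf.antitone (Fin.zero_le i)).trans_lt hn
  let h : Fin (s + 1) → Fin n := fun i ↦ ⟨f i, hfn i⟩
  have hh : StrictAnti h := fun _ _ hij ↦ hf hij
  let A : Finset (Fin n) := Iio ⟨k - s, hlast.trans_lt (hfn _)⟩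
  have hA : #A = k - s := Fin.card_Iio _
  have hAh : ∀ x ∈ A, ∀ i, x < h i := fun x hx i ↦
    (mem_Iio.1 hx).trans_le (hlast.trans (hf.antitone (Fin.le_last i)))
  have hAH : ∀ x ∈ A, ∀ y ∈ univ.image h, x < y := fun x hx y hy ↦ by
    obtain ⟨i, -, rfl⟩ := mem_image.1 hy
    exact hAh x hx i
  have hAne : A.Nonempty := ⟨⟨0, by omega⟩, mem_Iio.2 (Fin.mk_lt_mk.2 (by omega))⟩
  have hcard : #(A ∪ univ.image h) = k + 1 := by
    rw [card_union_of_disjoint (disjoint_left.2 fun x hx hy ↦ (hAH x hx _ hy).false),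
      card_image_of_injective _ hh.injective, hA, card_univ, Fintype.card_fin]
    omega
  refine ⟨initSeg (A ∪ univ.image h), hcard ▸ isInitSeg_initSeg, ?_, ?_⟩
  · rw [card_initSeg_union_image hh hAh, initSeg_Iio, card_singleton, hA, add_comm]
    congr 1
    refine sum_congr rfl fun i _ ↦ ?_
    rw [Fin.card_Iio]
    congr 1
    omega
  · have hsum :
        ∑ i, (#(Iio (h i))).choose (k - s - 1 + (s + 1) - i) = ∑ i, (f i).choose (k - i) :=
      sum_congr rfl fun i _ ↦ by
        rw [Fin.card_Iio]
        congr 1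
        omega
    rw [shadow_initSeg_union hAne hAH,
      card_initSeg_union_image hh fun x hx ↦ hAh x (mem_of_mem_erase hx),
      card_erase_of_mem (min'_mem A hAne), hA, hsum]
    have := card_pos.2 (initSeg_nonempty (s := A.erase (A.min' hAne)))
    omega

theorem kruskal_katona_bound_general {V : Type*} [DecidableEq V] (C : Finset (Finset V))
    (hdown : ∀ s ∈ C, ∀ t ⊆ s, t ∈ C)
    (k s : ℕ) (f : Fin (s + 1) → ℕ)
    (hsk : s < k)
    (hanti : ∀ i j : Fin (s + 1), i < j → f j < f i)
    (hlast : k - s ≤ f (Fin.last s))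
    (hrep : (C.filter fun t => t.card = k).card
        = ∑ i : Fin (s + 1), Nat.choose (f i) (k - (i : ℕ))) :
    (C.filter fun t => t.card = k + 1).card
      ≤ ∑ i : Fin (s + 1), Nat.choose (f i) (k - (i : ℕ) + 1) := by
  by_contra! hlt
  change _ < #(C # (k + 1)) at hlt
  change #(C # k) = _ at hrep
  obtain ⟨𝒞, h𝒞, h𝒞card, h𝒞shadow⟩ :=
    exists_isInitSeg_card_shadow (n := #(C.sup id) + f 0 + 1) hsk hanti hlast (by omega)
  have hKK : #(∂ 𝒞) ≤ #(∂ (C # (k + 1))) :=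
    kruskal_katona_of_subset (fun t ht ↦ le_sup (f := id) (mem_slice.1 ht).1) (by omega)
      sized_slice h𝒞 (by omega)
  have hfaces : #(∂ (C # (k + 1))) ≤ #(C # k) :=
    card_le_card (IsLowerSet.shadow_slice_subset (fun t u hut ht ↦ hdown t ht u hut) k)
  omega

/-- Kruskal–Katona bound: if `C` is a simplicial complex (on a vertex set `V`) and
`c_k(C) = C(n_k, k) + C(n_{k-1}, k-1) + ⋯ + C(n_{k-s}, k-s)` is the `k`-canonical
representation (encoded by `f : Fin (s+1) → ℕ`, `f i = n_{k-i}`, strictly decreasing,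
with `n_{k-s} ≥ k - s > 0`), then
`c_{k+1}(C) ≤ C(n_k, k+1) + C(n_{k-1}, k) + ⋯ + C(n_{k-s}, k-s+1)`. -/
theorem kruskal_katona_bound {V : Type*} [DecidableEq V] (C : Finset (Finset V))
    (hempty : ∅ ∈ C) (hsingle : ∀ v : V, {v} ∈ C)
    (hdown : ∀ s ∈ C, ∀ t ⊆ s, t ∈ C)
    (k s : ℕ) (f : Fin (s + 1) → ℕ)
    (hsk : s < k)
    (hanti : ∀ i j : Fin (s + 1), i < j → f j < f i)
    (hlast : k - s ≤ f (Fin.last s))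
    (hrep : (C.filter fun t => t.card = k).card
        = ∑ i : Fin (s + 1), Nat.choose (f i) (k - (i : ℕ))) :
    (C.filter fun t => t.card = k + 1).card
      ≤ ∑ i : Fin (s + 1), Nat.choose (f i) (k - (i : ℕ) + 1) :=
  kruskal_katona_bound_general C hdown k s f hsk hanti hlast hrep
end

section
/- Given a vector (1, c_1, c_2, ..., c_t) of positive integers such that for every 1 ≤ k < t, writing c_k = C(n_k, k) + C(n_{k-1}, k-1) + ... + C(n_{k-s}, k-s) in its k-canonical representation, one has c_{k+1} ≤ C(n_k, k+1) + C(n_{k-1}, k) + ... + C(n_{k-s}, k-s+1), there exists a simplicial complex C with c_i(C) = c_i for all 0 ≤ i ≤ t. -/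
/-!
Take `n = c 1` and let `A k` be the colex initial segment of `k`-subsets of `Fin n` of size `c k`.
The union of the `A k` is a simplicial complex as soon as `∂ (A (k + 1)) ⊆ A k`, and since the
shadow of an initial segment is again an initial segment, this only needs
`#(∂ (A (k + 1))) ≤ c k`. The canonical representation of `c k` describes an explicit
family `𝒟` of `(k + 1)`-sets with `#𝒟 ≥ c (k + 1)` whose shadow lies in a family of size `c k`,
and Kruskal–Katona gives `#(∂ (A (k + 1))) ≤ #(∂ 𝒟)`.
-/

/-- A family of finsets of `Fin n` is a simplicial complex on the vertex set `Fin n` if it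
contains the empty set, all singletons, and is closed under taking subsets. -/
def IsSimplicialComplex {n : ℕ} (C : Finset (Finset (Fin n))) : Prop :=
  ∅ ∈ C ∧ (∀ v : Fin n, {v} ∈ C) ∧ ∀ s ∈ C, ∀ t ⊆ s, t ∈ C

/-- The `i`-th face number of a complex: the number of faces with exactly `i` vertices. -/
def faceCount {n : ℕ} (C : Finset (Finset (Fin n))) (i : ℕ) : ℕ :=
  (C.filter fun s => s.card = i).card

open Finset Finset.Colex
open scoped FinsetFamily

lemma StrictAnti.fin_tail {α : Type*} [Preorder α] {n : ℕ} {g : Fin (n + 1) → α}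
    (hg : StrictAnti g) : StrictAnti (Fin.tail g) :=
  hg.comp_strictMono Fin.strictMono_succ

lemma Nat.choose_lt_choose_of_lt {n m k : ℕ} (hk : 0 < k) (hkm : k ≤ m) (hnm : n < m) :
    n.choose k < m.choose k := by
  obtain ⟨m, rfl⟩ := Nat.exists_eq_add_of_lt hnm
  rw [Nat.choose_succ_left _ _ hk]
  have := Nat.choose_pos (n := n + m) (k := k - 1) (by omega)
  have := Nat.choose_le_choose k (Nat.le_add_right n m)
  omega

lemma shadow_powersetCard_subset {α : Type*} [DecidableEq α] (X : Finset α) (r : ℕ) :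
    ∂ (powersetCard r X) ⊆ powersetCard (r - 1) X := by
  intro u hu
  obtain ⟨A, hA, a, ha, rfl⟩ := mem_shadow_iff.1 hu
  rw [mem_powersetCard] at hA ⊢
  exact ⟨(erase_subset _ _).trans hA.1, by rw [card_erase_of_mem ha, hA.2]⟩

namespace Finset.Colex

variable {α : Type*} [LinearOrder α] {𝒜 ℬ : Finset (Finset α)} {r : ℕ}

lemma isInitSeg_powersetCard_univ [Fintype α] (r : ℕ) :
    IsInitSeg (powersetCard r (univ : Finset α)) r :=
  ⟨Set.sized_powersetCard _ _, fun _ _ _ ht => mem_powersetCard_univ.2 ht.2⟩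

lemma IsInitSeg.erase_of_forall_le (h : IsInitSeg 𝒜 r) {s : Finset α}
    (hs : ∀ t ∈ 𝒜, toColex t ≤ toColex s) : IsInitSeg (𝒜.erase s) r := by
  refine ⟨h.1.mono (erase_subset _ _),
    fun u t hu ht => mem_erase.2 ⟨?_, h.2 (mem_of_mem_erase hu) ht⟩⟩
  rintro rfl
  exact (ht.1.trans_le (hs u (mem_of_mem_erase hu))).false

lemma IsInitSeg.exists_subset_card_eq (h : IsInitSeg 𝒜 r) {m : ℕ} (hm : m ≤ #𝒜) :
    ∃ ℬ ⊆ 𝒜, IsInitSeg ℬ r ∧ #ℬ = m := by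
  induction 𝒜 using strongInduction with
  | H 𝒜 ih =>
    obtain hm | hm := hm.eq_or_lt
    · exact ⟨𝒜, subset_rfl, h, hm.symm⟩
    obtain ⟨s, hs, hmax⟩ := exists_max_image 𝒜 toColex (card_pos.1 (by omega))
    obtain ⟨ℬ, hℬ, hℬ', rfl⟩ := ih _ (erase_ssubset hs) (h.erase_of_forall_le hmax)
      (by rw [card_erase_of_mem hs]; omega)
    exact ⟨ℬ, hℬ.trans (erase_subset _ _), hℬ', rfl⟩

lemma exists_isInitSeg_card_eq [Fintype α] {m : ℕ} (hm : m ≤ (Fintype.card α).choose r) :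
    ∃ 𝒜 : Finset (Finset α), IsInitSeg 𝒜 r ∧ #𝒜 = m := by
  obtain ⟨𝒜, -, h𝒜⟩ := (isInitSeg_powersetCard_univ (α := α) r).exists_subset_card_eq
    (m := m) (by rwa [card_powersetCard, card_univ])
  exact ⟨𝒜, h𝒜⟩

lemma IsInitSeg.shadow_subset_of_card_le [Finite α] (h𝒜 : IsInitSeg 𝒜 (r + 1))
    (hℬ : IsInitSeg ℬ r) (hcard : #(∂ 𝒜) ≤ #ℬ) : ∂ 𝒜 ⊆ ℬ := by
  have hshadow : IsInitSeg (∂ 𝒜) r := by simpa using h𝒜.shadow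
  obtain h | h := hshadow.total hℬ
  · exact h
  · exact (eq_of_subset_of_card_le h hcard).ge

end Finset.Colex

section Cascade

variable {α : Type*} [LinearOrder α] [LocallyFiniteOrderBot α]

/-- The sets `{g 0, …, g (i - 1)} ∪ B` with `B` an `(r - i)`-subset of `Iio (g i)`: for strictly
decreasing `g` this is the colex initial segment of `r`-sets of size
`∑ i, C(#(Iio (g i)), r - i)`. -/
def cascadeFamily : ∀ {s : ℕ}, (Fin (s + 1) → α) → ℕ → Finset (Finset α)
  | 0, g, r => powersetCard r (Iio (g 0))
  | _ + 1, g, r =>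
    powersetCard r (Iio (g 0)) ∪ (cascadeFamily (Fin.tail g) (r - 1)).image (insert (g 0))

lemma subset_Iic_of_mem_cascadeFamily {s r : ℕ} {g : Fin (s + 1) → α} (hg : Antitone g)
    {A : Finset α} (hA : A ∈ cascadeFamily g r) : A ⊆ Iic (g 0) := by
  induction s generalizing r A with
  | zero => exact (mem_powersetCard.1 hA).1.trans Iio_subset_Iic_self
  | succ s ih =>
    simp only [cascadeFamily, mem_union, mem_powersetCard, mem_image] at hA
    obtain ⟨hA, -⟩ | ⟨B, hB, rfl⟩ := hA
    · exact hA.trans Iio_subset_Iic_self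
    · have hB := ih (hg.comp_monotone Fin.strictMono_succ.monotone) hB
      exact insert_subset (mem_Iic.2 le_rfl) (hB.trans (Iic_subset_Iic.2 (hg (Fin.zero_le _))))

lemma subset_Iio_of_mem_cascadeFamily_tail {s r : ℕ} {g : Fin (s + 2) → α} (hg : StrictAnti g)
    {B : Finset α} (hB : B ∈ cascadeFamily (Fin.tail g) r) : B ⊆ Iio (g 0) :=
  fun _ ha => mem_Iio.2 <| (mem_Iic.1 <|
    subset_Iic_of_mem_cascadeFamily hg.fin_tail.antitone hB ha).trans_lt
    (hg (Fin.succ_pos 0))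

lemma card_cascadeFamily {s : ℕ} {g : Fin (s + 1) → α} (hg : StrictAnti g) (r : ℕ) :
    #(cascadeFamily g r) = ∑ i, (#(Iio (g i))).choose (r - i) := by
  induction s generalizing r with
  | zero => simp [cascadeFamily]
  | succ s ih =>
    have hnotMem {B : Finset α} (hB : B ∈ cascadeFamily (Fin.tail g) (r - 1)) : g 0 ∉ B :=
      fun h => notMem_Iio_self (subset_Iio_of_mem_cascadeFamily_tail hg hB h)
    rw [cascadeFamily, card_union_of_disjoint, card_image_of_injOn, card_powersetCard,
      ih hg.fin_tail, Fin.sum_univ_succ (n := s + 1)]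
    · simp only [Fin.tail, Fin.val_succ, Fin.val_zero, Nat.sub_zero, Nat.sub_sub, add_comm]
    · intro B hB B' hB' h
      rw [← erase_insert (hnotMem hB), ← erase_insert (hnotMem hB')]
      exact congrArg (erase · (g 0)) h
    · refine disjoint_left.2 fun A hA hA' => ?_
      obtain ⟨B, -, rfl⟩ := mem_image.1 hA'
      exact notMem_Iio_self ((mem_powersetCard.1 hA).1 (mem_insert_self _ _))

lemma sized_cascadeFamily {s r : ℕ} {g : Fin (s + 1) → α} (hg : StrictAnti g) (hsr : s ≤ r) :
    (cascadeFamily g r : Set (Finset α)).Sized r := by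
  induction s generalizing r with
  | zero => exact Set.sized_powersetCard _ _
  | succ s ih =>
    rw [cascadeFamily, coe_union, Set.sized_union]
    refine ⟨Set.sized_powersetCard _ _, fun A hA => ?_⟩
    obtain ⟨B, hB, rfl⟩ := mem_image.1 hA
    have hBIio := subset_Iio_of_mem_cascadeFamily_tail hg hB
    rw [card_insert_of_notMem fun h => notMem_Iio_self (hBIio h), ih hg.fin_tail (by omega) hB]
    omega

lemma shadow_cascadeFamily_subset {s r : ℕ} {g : Fin (s + 1) → α} (hg : StrictAnti g)
    (hsr : s < r) : ∂ (cascadeFamily g r) ⊆ cascadeFamily g (r - 1) := by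
  induction s generalizing r with
  | zero => exact shadow_powersetCard_subset _ _
  | succ s ih =>
    intro u hu
    obtain ⟨A, hA, a, ha, rfl⟩ := mem_shadow_iff.1 hu
    rw [cascadeFamily, mem_union] at hA ⊢
    obtain hA | hA := hA
    · exact Or.inl (shadow_powersetCard_subset _ _ (erase_mem_shadow hA ha))
    obtain ⟨B, hB, rfl⟩ := mem_image.1 hA
    have hBIio := subset_Iio_of_mem_cascadeFamily_tail hg hB
    obtain rfl | hag := eq_or_ne a (g 0)
    · refine Or.inl ?_
      rw [erase_insert fun h => notMem_Iio_self (hBIio h), mem_powersetCard]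
      exact ⟨hBIio, sized_cascadeFamily hg.fin_tail (by omega) hB⟩
    · refine Or.inr (mem_image.2 ⟨B.erase a, ?_, (erase_insert_of_ne hag.symm).symm⟩)
      exact ih hg.fin_tail (by omega) (erase_mem_shadow hB (mem_of_mem_insert_of_ne ha hag))

end Cascade

section Canonical

variable {n k s : ℕ} {f : Fin (s + 1) → ℕ}

lemma head_lt_or_eq_of_sum_choose_le (hsk : s < k)
    (hlast : k - s ≤ f (Fin.last s)) (hck : ∑ i, (f i).choose (k - i) ≤ n.choose k) :
    f 0 < n ∨ s = 0 ∧ f 0 = n := by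
  refine or_iff_not_imp_left.2 fun hn => ?_
  have hle := Nat.choose_le_choose k (not_lt.1 hn)
  have hlast_pos := Nat.choose_pos hlast
  obtain rfl | hs := Nat.eq_zero_or_pos s
  · refine ⟨rfl, le_antisymm (not_lt.1 fun hlt => ?_) (not_lt.1 hn)⟩
    have hkf : k ≤ f 0 := by simpa using hlast
    have hchoose := Nat.choose_lt_choose_of_lt (by omega) hkf hlt
    rw [Fin.sum_univ_one, Fin.val_zero, Nat.sub_zero] at hck
    omega
  · have hpair :
        (f 0).choose k + (f (Fin.last s)).choose (k - s) ≤ ∑ i, (f i).choose (k - i) := by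
      have hne : (0 : Fin (s + 1)) ≠ Fin.last s := by simp [Fin.ext_iff]; omega
      simpa [sum_pair hne] using sum_le_sum_of_subset
        (f := fun i : Fin (s + 1) => (f i).choose (k - i)) (subset_univ {0, Fin.last s})
    omega

lemma exists_sized_card_eq_card_shadow_le (hf : StrictAnti f) (hsk : s < k)
    (hlast : k - s ≤ f (Fin.last s)) (hck : ∑ i, (f i).choose (k - i) ≤ n.choose k) :
    ∃ 𝒟 : Finset (Finset (Fin n)), (𝒟 : Set (Finset (Fin n))).Sized (k + 1) ∧
      #𝒟 = ∑ i, (f i).choose (k - i + 1) ∧ #(∂ 𝒟) ≤ ∑ i, (f i).choose (k - i) := by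
  obtain h0 | ⟨rfl, rfl⟩ := head_lt_or_eq_of_sum_choose_le hsk hlast hck
  · let g : Fin (s + 1) → Fin n := fun i => ⟨f i, (hf.antitone (Fin.zero_le i)).trans_lt h0⟩
    have hg : StrictAnti g := fun i j hij => hf hij
    have hcard (r : ℕ) : #(cascadeFamily g r) = ∑ i, (f i).choose (r - i) := by
      simp [card_cascadeFamily hg, g]
    refine ⟨cascadeFamily g (k + 1), sized_cascadeFamily hg (by omega), ?_, ?_⟩
    · rw [hcard]
      refine sum_congr rfl fun i _ => ?_
      have hi := i.is_le
      congr 1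
      omega
    · rw [← hcard]
      exact card_le_card (shadow_cascadeFamily_subset hg (by omega))
  · refine ⟨powersetCard (k + 1) univ, Set.sized_powersetCard _ _, by simp, ?_⟩
    simpa using (Set.sized_powersetCard (univ : Finset (Fin (f 0))) (k + 1)).shadow.card_le

end Canonical

section Levels

variable {α : Type*} [DecidableEq α] {A : ℕ → Finset (Finset α)} {T : ℕ}

lemma shadow_iterate_subset_of_shadow_subset (h : ∀ k < T, ∂ (A (k + 1)) ⊆ A k) {d k : ℕ}
    (hdk : d ≤ k) (hkT : k ≤ T) : ∂^[d] (A k) ⊆ A (k - d) := by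
  induction d with
  | zero => simp
  | succ d ih =>
    rw [Function.iterate_succ_apply']
    calc ∂ (∂^[d] (A k)) ⊆ ∂ (A (k - d)) := shadow_mono (ih (by omega))
      _ = ∂ (A (k - (d + 1) + 1)) := by rw [show k - (d + 1) + 1 = k - d by omega]
      _ ⊆ A (k - (d + 1)) := h _ (by omega)

lemma mem_of_subset_of_shadow_subset (hsized : ∀ k, (A k : Set (Finset α)).Sized k)
    (h : ∀ k < T, ∂ (A (k + 1)) ⊆ A k) {k : ℕ} (hkT : k ≤ T) {s t : Finset α}
    (hs : s ∈ A k) (hts : t ⊆ s) : t ∈ A #t := by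
  have hs_card : #s = k := hsized k hs
  have ht_card : #t ≤ k := hs_card ▸ card_le_card hts
  have ht : t ∈ ∂^[k - #t] (A k) :=
    mem_shadow_iterate_iff_exists_sdiff.2
      ⟨s, hs, hts, by rw [card_sdiff_of_subset hts, hs_card]⟩
  simpa [Nat.sub_sub_self ht_card] using
    shadow_iterate_subset_of_shadow_subset h (Nat.sub_le k #t) hkT ht

end Levels

section Complex

variable {n T : ℕ} {A : ℕ → Finset (Finset (Fin n))}

lemma isSimplicialComplex_biUnion (hsized : ∀ k, (A k : Set (Finset (Fin n))).Sized k)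
    (h : ∀ k < T, ∂ (A (k + 1)) ⊆ A k) (hT : 1 ≤ T) (h0 : ∅ ∈ A 0)
    (h1 : ∀ v, {v} ∈ A 1) : IsSimplicialComplex ((range (T + 1)).biUnion A) := by
  refine ⟨mem_biUnion.2 ⟨0, by simp, h0⟩, fun v => mem_biUnion.2 ⟨1, by simpa, h1 v⟩,
    fun s hs t hts => ?_⟩
  obtain ⟨k, hk, hs⟩ := mem_biUnion.1 hs
  have hkT : k ≤ T := Nat.lt_succ_iff.1 (mem_range.1 hk)
  have ht_card : #t ≤ k := hsized k hs ▸ card_le_card hts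
  exact mem_biUnion.2
    ⟨#t, mem_range.2 (by omega), mem_of_subset_of_shadow_subset hsized h hkT hs hts⟩

lemma faceCount_biUnion (hsized : ∀ k, (A k : Set (Finset (Fin n))).Sized k) {i : ℕ}
    (hi : i ≤ T) : faceCount ((range (T + 1)).biUnion A) i = #(A i) := by
  rw [faceCount]
  congr 1
  ext s
  simp only [mem_filter, mem_biUnion, mem_range]
  constructor
  · rintro ⟨⟨k, -, hs⟩, rfl⟩
    rwa [hsized k hs]
  · exact fun hs => ⟨⟨i, by omega, hs⟩, hsized i hs⟩

end Complex

theorem exists_isSimplicialComplex_faceCount_eq {n T : ℕ} {c : ℕ → ℕ} (hT : 1 ≤ T)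
    (hc0 : c 0 = 1) (hc1 : c 1 = n)
    (hstep : ∀ k, 1 ≤ k → k < T → c k ≤ n.choose k → ∃ 𝒟 : Finset (Finset (Fin n)),
      (𝒟 : Set (Finset (Fin n))).Sized (k + 1) ∧ c (k + 1) ≤ #𝒟 ∧ #(∂ 𝒟) ≤ c k) :
    ∃ C : Finset (Finset (Fin n)),
      IsSimplicialComplex C ∧ ∀ i ≤ T, faceCount C i = c i := by
  have hle (k : ℕ) (hk : k ≤ T) : c k ≤ n.choose k := by
    induction k with
    | zero => simp [hc0]
    | succ k ih =>
      obtain rfl | hk1 := k.eq_zero_or_pos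
      · simp [hc1]
      obtain ⟨𝒟, h𝒟, hc, -⟩ := hstep k hk1 (by omega) (ih (by omega))
      simpa using hc.trans h𝒟.card_le
  choose A hA using fun k => exists_isInitSeg_card_eq (α := Fin n) (r := k)
    (m := min (c k) (n.choose k)) (by simp)
  have hsized (k : ℕ) : (A k : Set (Finset (Fin n))).Sized k := (hA k).1.1
  have hcard (k : ℕ) (hk : k ≤ T) : #(A k) = c k := (hA k).2.trans (min_eq_left (hle k hk))
  have hfull (k : ℕ) (hk : k ≤ 1) : A k = powersetCard k univ := by
    refine eq_of_subset_of_card_le (hsized k).subset_powersetCard_univ ?_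
    rw [hcard k (by omega), card_powersetCard, card_univ, Fintype.card_fin]
    interval_cases k <;> simp [hc0, hc1]
  have hshadow (k : ℕ) (hk : k < T) : ∂ (A (k + 1)) ⊆ A k := by
    obtain rfl | hk1 := k.eq_zero_or_pos
    · rw [hfull 0 zero_le_one]
      exact (hsized 1).shadow.subset_powersetCard_univ
    obtain ⟨𝒟, h𝒟, hc, h𝒟shadow⟩ := hstep k hk1 hk (hle k hk.le)
    refine (hA (k + 1)).1.shadow_subset_of_card_le (hA k).1 ?_
    calc #(∂ (A (k + 1)))
        ≤ #(∂ 𝒟) := kruskal_katona h𝒟 (hcard _ hk ▸ hc) (hA (k + 1)).1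
      _ ≤ c k := h𝒟shadow
      _ = #(A k) := (hcard k hk.le).symm
  refine ⟨_, isSimplicialComplex_biUnion hsized hshadow hT ?_ ?_,
    fun i hi => (faceCount_biUnion hsized hi).trans (hcard i hi)⟩
  · simp [hfull 0 zero_le_one]
  · simp [hfull 1 le_rfl]

/-- `f i` is `n_{k-i}` in the `k`-canonical representation of `c k`. Level `1` is built even when
`t = 0`, to make every singleton a face. -/
theorem kruskal_katona_existence_general (t : ℕ) (c : ℕ → ℕ)
    (hc0 : c 0 = 1)
    (hbound : ∀ k, 1 ≤ k → k < t →
      ∃ (s : ℕ) (f : Fin (s + 1) → ℕ),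
        s < k ∧
        (∀ i j : Fin (s + 1), i < j → f j < f i) ∧
        k - s ≤ f (Fin.last s) ∧
        c k = ∑ i : Fin (s + 1), Nat.choose (f i) (k - (i : ℕ)) ∧
        c (k + 1) ≤ ∑ i : Fin (s + 1), Nat.choose (f i) (k - (i : ℕ) + 1)) :
    ∃ (n : ℕ) (C : Finset (Finset (Fin n))),
      IsSimplicialComplex C ∧ ∀ i ≤ t, faceCount C i = c i := by
  obtain ⟨C, hC, hcount⟩ := exists_isSimplicialComplex_faceCount_eq (T := max t 1)
    (le_max_right t 1) hc0 rfl fun k hk1 hkT hck => by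
      obtain ⟨s, f, hsk, hf, hlast, hck_eq, hnext⟩ := hbound k hk1 (by omega)
      obtain ⟨𝒟, h𝒟, hcard, hshadow⟩ :=
        exists_sized_card_eq_card_shadow_le hf hsk hlast (hck_eq ▸ hck)
      exact ⟨𝒟, h𝒟, hcard ▸ hnext, hck_eq ▸ hshadow⟩
  exact ⟨c 1, C, hC, fun i hi => hcount i (le_max_of_le_left hi)⟩

/-- Kruskal–Katona, existence part: given a vector `(1, c_1, …, c_t)` of positive integers
such that for every `1 ≤ k < t`, writing `c_k` in its `k`-canonical representation
`c_k = C(n_k, k) + ⋯ + C(n_{k-s}, k-s)` (encoded by `f : Fin (s+1) → ℕ`, `f i = n_{k-i}`),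
one has `c_{k+1} ≤ C(n_k, k+1) + ⋯ + C(n_{k-s}, k-s+1)`, there is a simplicial complex `C`
with `c_i(C) = c_i` for all `0 ≤ i ≤ t`. -/
theorem kruskal_katona_existence (t : ℕ) (c : ℕ → ℕ)
    (hc0 : c 0 = 1) (hpos : ∀ i ≤ t, 0 < c i)
    (hbound : ∀ k, 1 ≤ k → k < t →
      ∃ (s : ℕ) (f : Fin (s + 1) → ℕ),
        s < k ∧
        (∀ i j : Fin (s + 1), i < j → f j < f i) ∧
        k - s ≤ f (Fin.last s) ∧
        c k = ∑ i : Fin (s + 1), Nat.choose (f i) (k - (i : ℕ)) ∧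
        c (k + 1) ≤ ∑ i : Fin (s + 1), Nat.choose (f i) (k - (i : ℕ) + 1)) :
    ∃ (n : ℕ) (C : Finset (Finset (Fin n))),
      IsSimplicialComplex C ∧ ∀ i ≤ t, faceCount C i = c i :=
  kruskal_katona_existence_general t c hc0 hbound
end

section
/- Given positive integers m, k, and r with r ≥ k, there exist unique s, n_k, n_{k-1}, ..., n_{k-s} such that m = T(n_k, k, r) + T(n_{k-1}, k-1, r-1) + ... + T(n_{k-s}, k-s, r-s), where n_{k-i} - floor(n_{k-i}/(r-i)) > n_{k-i-1} for all 0 ≤ i < s, and n_{k-s} ≥ k-s > 0. -/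
/-- `turanCount n k r` is the number of `k`-cliques of the Turán graph `T_{n,r}`. -/
def turanCount (n k r : ℕ) : ℕ :=
  ((SimpleGraph.turanGraph n r).cliqueFinset k).card

/-!
Realize `T_{n,r}` on `{0, …, n-1}` with `x ~ y` iff `x ≢ y (mod r)`, so that its `k`-cliques are
the `k`-sets of pairwise distinct residues. In `T_{n+1,r+1}` the cliques through the vertex `0`
correspond to cliques among the vertices of `{1, …, n}` not divisible by `r + 1`; renumbering these
as `0, …, n - ⌊n/(r+1)⌋ - 1` matches their residues mod `r + 1` with the residues mod `r`. This
gives the Pascal-type rule `T(n+1, k+1, r+1) = T(n, k+1, r+1) + T(n - ⌊n/(r+1)⌋, k, r)`.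

By this rule `T(·, k, r)` is strictly increasing from `n = k` on, and the chain condition bounds
the tail of a canonical sum by `T(n_k - ⌊n_k/r⌋, k-1, r-1) - 1`, so that
`T(n_k, k, r) ≤ m < T(n_k + 1, k, r)`. Thus `n_k` is determined greedily by `m`, and induction on
`k`, applied to `m - T(n_k, k, r)`, gives existence and uniqueness.
-/

open Finset

def residueCliqueCount (V : Finset ℕ) (k r : ℕ) : ℕ :=
  #((V.powersetCard k).filter fun S : Finset ℕ => Set.InjOn (· % r) (S : Set ℕ))

theorem turanCount_eq_residueCliqueCount (n k r : ℕ) :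
    turanCount n k r = residueCliqueCount (range n) k r := by
  rw [turanCount, residueCliqueCount, ← Nat.Iio_eq_range, ← Fin.map_valEmbedding_univ,
    powersetCard_map, filter_map, card_map]
  congr 1
  ext S
  simp only [Function.comp_apply, RelEmbedding.coe_toEmbedding, mapEmbedding_apply, coe_map,
    SimpleGraph.mem_cliqueFinset_iff, SimpleGraph.isNClique_iff, SimpleGraph.isClique_iff,
    mem_filter, mem_powersetCard_univ]
  rw [← Fin.valEmbedding.injective.injOn.comp_iff, Set.injOn_iff_pairwise_ne]
  exact and_comm

theorem residueCliqueCount_map (f : ℕ ↪ ℕ) {V : Finset ℕ} {k r r' : ℕ}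
    (hf : ∀ x ∈ V, ∀ y ∈ V, f x % r' = f y % r' ↔ x % r = y % r) :
    residueCliqueCount (V.map f) k r' = residueCliqueCount V k r := by
  rw [residueCliqueCount, residueCliqueCount, powersetCard_map, filter_map, card_map]
  congr 1
  refine filter_congr fun S hS => ?_
  have hSV : ∀ x ∈ S, x ∈ V := fun x hx => (mem_powersetCard.1 hS).1 hx
  simp only [Function.comp_apply, RelEmbedding.coe_toEmbedding, mapEmbedding_apply, coe_map,
    ← f.injective.injOn.comp_iff]
  exact ⟨fun h x hx y hy hxy => h hx hy ((hf x (hSV x hx) y (hSV y hy)).2 hxy),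
    fun h x hx y hy hxy => h hx hy ((hf x (hSV x hx) y (hSV y hy)).1 hxy)⟩

theorem residueCliqueCount_insert {a : ℕ} {V : Finset ℕ} (ha : a ∉ V) (k r : ℕ) :
    residueCliqueCount (insert a V) (k + 1) r =
      residueCliqueCount V (k + 1) r + residueCliqueCount {x ∈ V | x % r ≠ a % r} k r := by
  have hnot : ∀ S ∈ V.powersetCard k, a ∉ S :=
    fun S hS haS => ha ((mem_powersetCard.1 hS).1 haS)
  rw [residueCliqueCount, powersetCard_succ_insert ha, filter_union, card_union_of_disjoint,
    filter_image, card_image_of_injOn]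
  · congr 1
    rw [residueCliqueCount]
    congr 1
    ext S
    simp only [mem_filter, mem_powersetCard, coe_insert, subset_iff]
    constructor
    · rintro ⟨⟨hSV, hcard⟩, hinj⟩
      rw [Set.injOn_insert fun h => ha (hSV h)] at hinj
      exact ⟨⟨fun x hx => ⟨hSV hx, fun hxa => hinj.2 ⟨x, hx, hxa⟩⟩, hcard⟩, hinj.1⟩
    · rintro ⟨⟨hSV, hcard⟩, hinj⟩
      refine ⟨⟨fun x hx => (hSV hx).1, hcard⟩, ?_⟩
      rw [Set.injOn_insert fun h => ha (hSV h).1]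
      exact ⟨hinj, fun ⟨x, hx, hxa⟩ => (hSV hx).2 hxa⟩
  · intro S hS T hT hST
    rw [← erase_insert (hnot S (mem_filter.1 hS).1), ← erase_insert (hnot T (mem_filter.1 hT).1)]
    exact congrArg (·.erase a) hST
  · rw [disjoint_left]
    intro S hS hS'
    obtain ⟨T, -, rfl⟩ := mem_image.1 (mem_filter.1 hS').1
    exact ha ((mem_powersetCard.1 (mem_filter.1 hS).1).1 (mem_insert_self a T))

/-- The `y`-th positive integer (counting from `0`) not divisible by `r + 1`, for `0 < r`. -/
def nthNonMultiple (r y : ℕ) : ℕ := y / r * (r + 1) + y % r + 1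

section nthNonMultiple

variable {r : ℕ}

theorem nthNonMultiple_mod (hr : 0 < r) (y : ℕ) : nthNonMultiple r y % (r + 1) = y % r + 1 := by
  rw [nthNonMultiple, add_assoc, Nat.mul_add_mod',
    Nat.mod_eq_of_lt (by simpa using Nat.mod_lt y hr)]

theorem nthNonMultiple_div (hr : 0 < r) (y : ℕ) : nthNonMultiple r y / (r + 1) = y / r := by
  rw [nthNonMultiple, add_assoc, add_comm, Nat.add_mul_div_right _ _ (Nat.succ_pos r),
    Nat.div_eq_of_lt (by simpa using Nat.mod_lt y hr), zero_add]

theorem nthNonMultiple_injective (r : ℕ) : Function.Injective (nthNonMultiple r) := by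
  intro x y hxy
  rcases Nat.eq_zero_or_pos r with rfl | hr
  · simpa [nthNonMultiple] using hxy
  have hdiv : x / r = y / r := by rw [← nthNonMultiple_div hr, hxy, nthNonMultiple_div hr]
  have hmod : x % r = y % r := by
    have := nthNonMultiple_mod hr x
    rw [hxy, nthNonMultiple_mod hr] at this
    omega
  rw [← Nat.div_add_mod x r, hdiv, hmod, Nat.div_add_mod]

theorem nthNonMultiple_eq (r y : ℕ) : nthNonMultiple r y = y + y / r + 1 := by
  have := Nat.div_add_mod y r
  rw [nthNonMultiple]
  linarith

theorem nthNonMultiple_le {n y : ℕ} (hy : y < n - n / (r + 1)) : nthNonMultiple r y ≤ n := by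
  have hr : 0 < r := by rcases Nat.eq_zero_or_pos r with rfl | h <;> simp_all
  have hn : n < (r + 1) * (n / (r + 1) + 1) := Nat.lt_mul_div_succ n (Nat.succ_pos r)
  generalize n / (r + 1) = q at hy hn
  have hq : y / r < q + 1 := (Nat.div_lt_iff_lt_mul hr).2 <| by
    have : (r + 1) * (q + 1) = (q + 1) * r + (q + 1) := by ring
    omega
  rw [nthNonMultiple_eq]
  omega

theorem map_nthNonMultiple_range (n r : ℕ) :
    (range (n - n / (r + 1))).map ⟨nthNonMultiple r, nthNonMultiple_injective r⟩ =
      {x ∈ (range n).map ⟨(· + 1), add_left_injective 1⟩ | x % (r + 1) ≠ 0 % (r + 1)} := by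
  apply eq_of_subset_of_card_le
  · simp only [subset_iff, mem_map, mem_filter, mem_range, Function.Embedding.coeFn_mk,
      forall_exists_index, and_imp, forall_apply_eq_imp_iff₂]
    intro y hy
    have hr : 0 < r := by rcases Nat.eq_zero_or_pos r with rfl | h <;> simp_all
    have hle := nthNonMultiple_le hy
    rw [nthNonMultiple_mod hr, nthNonMultiple_eq] at *
    exact ⟨⟨y + y / r, by omega, rfl⟩, by simp⟩
  · have hsplit := card_filter_add_card_filter_not (s := range n) (fun x => (r + 1) ∣ x + 1)
    rw [Nat.card_multiples, card_range] at hsplit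
    rw [filter_map, card_map, card_map, card_range]
    simp only [Function.comp_def, Function.Embedding.coeFn_mk, Nat.zero_mod, ne_eq,
      ← Nat.dvd_iff_mod_eq_zero]
    omega

end nthNonMultiple

theorem turanCount_succ_succ_succ (n k r : ℕ) :
    turanCount (n + 1) (k + 1) (r + 1) =
      turanCount n (k + 1) (r + 1) + turanCount (n - n / (r + 1)) k r := by
  have hshift : ∀ x ∈ range n, ∀ y ∈ range n, (x + 1) % (r + 1) = (y + 1) % (r + 1) ↔
      x % (r + 1) = y % (r + 1) :=
    fun x _ y _ => ⟨Nat.ModEq.add_right_cancel' 1, Nat.ModEq.add_right 1⟩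
  simp only [turanCount_eq_residueCliqueCount]
  rw [range_add_one', residueCliqueCount_insert (by simp), ← map_nthNonMultiple_range,
    residueCliqueCount_map _ hshift, residueCliqueCount_map (r := r)]
  intro x hx y _
  have hr : 0 < r := by rcases Nat.eq_zero_or_pos r with rfl | h <;> simp_all
  simp only [Function.Embedding.coeFn_mk, nthNonMultiple_mod hr, Nat.add_right_cancel_iff]

theorem turanCount_mono (k r : ℕ) : Monotone (turanCount · k r) := by
  intro a b hab
  simp only [turanCount_eq_residueCliqueCount, residueCliqueCount]
  exact card_le_card (filter_subset_filter _ (powersetCard_mono (range_subset_range.2 hab)))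

theorem turanCount_zero_right (n r : ℕ) : turanCount n 0 r = 1 := by
  rw [turanCount_eq_residueCliqueCount, residueCliqueCount, powersetCard_zero, filter_singleton,
    if_pos (by simp), card_singleton]

theorem turanCount_eq_zero_of_lt {n k r : ℕ} (h : n < k) : turanCount n k r = 0 := by
  simp [turanCount_eq_residueCliqueCount, residueCliqueCount, powersetCard_eq_empty.2, h]

theorem turanCount_pos {n k r : ℕ} (hkn : k ≤ n) (hkr : k ≤ r) : 0 < turanCount n k r := by
  rw [turanCount_eq_residueCliqueCount, residueCliqueCount, card_pos]
  refine ⟨range k, mem_filter.2 ⟨mem_powersetCard.2 ⟨range_subset_range.2 hkn, card_range k⟩, ?_⟩⟩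
  intro x hx y hy hxy
  simp only [coe_range, Set.mem_Iio] at hx hy hxy
  rwa [Nat.mod_eq_of_lt (by omega), Nat.mod_eq_of_lt (by omega)] at hxy

theorem sub_one_le_sub_div {n k r : ℕ} (hk : 0 < k) (hkr : k ≤ r) (hkn : k ≤ n) :
    k - 1 ≤ n - n / r := by
  have hrk : n / r ≤ n / k := Nat.div_le_div_left hkr hk
  have hq : 1 ≤ n / k := (Nat.one_le_div_iff hk).2 hkn
  have hqk : n / k * k ≤ n := Nat.div_mul_le_self n k
  obtain ⟨k, rfl⟩ := Nat.exists_eq_add_one.2 hk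
  have : k ≤ n / (k + 1) * k := Nat.le_mul_of_pos_left k hq
  rw [Nat.mul_succ] at hqk
  omega

theorem turanCount_lt_succ {n k r : ℕ} (hk : 0 < k) (hkr : k ≤ r) (hkn : k ≤ n) :
    turanCount n k r < turanCount (n + 1) k r := by
  have hpos := turanCount_pos (sub_one_le_sub_div hk hkr hkn) (Nat.sub_le_sub_right hkr 1)
  obtain ⟨k, rfl⟩ := Nat.exists_eq_add_one.2 hk
  obtain ⟨r, rfl⟩ := Nat.exists_eq_add_one.2 (hk.trans_le hkr)
  rw [turanCount_succ_succ_succ]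
  simpa using hpos

theorem le_turanCount_add {k r : ℕ} (hk : 0 < k) (hkr : k ≤ r) (j : ℕ) :
    j ≤ turanCount (k + j) k r := by
  induction j with
  | zero => exact Nat.zero_le _
  | succ j ih => exact ih.trans_lt (turanCount_lt_succ hk hkr (Nat.le_add_right k j))

theorem exists_le_lt_succ {φ : ℕ → ℕ} {m b : ℕ} (h0 : φ 0 ≤ m) (hb : m < φ b) :
    ∃ n, φ n ≤ m ∧ m < φ (n + 1) := by
  classical
  have hex : ∃ b, m < φ b := ⟨b, hb⟩
  obtain ⟨n, hn⟩ : ∃ n, Nat.find hex = n + 1 :=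
    Nat.exists_eq_succ_of_ne_zero fun h => (Nat.find_spec hex).not_ge (h ▸ h0)
  exact ⟨n, not_lt.1 (Nat.find_min hex (by omega)), hn ▸ Nat.find_spec hex⟩

theorem Monotone.eq_of_le_of_lt_succ {φ : ℕ → ℕ} (hφ : Monotone φ) {a b m : ℕ}
    (ha : φ a ≤ m) (ha' : m < φ (a + 1)) (hb : φ b ≤ m) (hb' : m < φ (b + 1)) : a = b := by
  by_contra hne
  rcases Nat.lt_or_gt_of_ne hne with h | h
  · exact (hφ (show a + 1 ≤ b from h)).not_gt (by omega)
  · exact (hφ (show b + 1 ≤ a from h)).not_gt (by omega)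

/-- The side conditions of a `(k, r)`-canonical representation, with `f i` standing for
`n_{k-i}`. -/
def IsKRCanonical (k r s : ℕ) (f : Fin (s + 1) → ℕ) : Prop :=
  s < k ∧ (∀ i : Fin s, f i.succ < f i.castSucc - f i.castSucc / (r - i)) ∧ k - s ≤ f (Fin.last s)

def krSum (k r s : ℕ) (f : Fin (s + 1) → ℕ) : ℕ :=
  ∑ i : Fin (s + 1), turanCount (f i) (k - i) (r - i)

section KRCanonical

variable {k r s : ℕ}

theorem isKRCanonical_zero_iff {f : Fin 1 → ℕ} : IsKRCanonical k r 0 f ↔ 0 < k ∧ k ≤ f 0 := by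
  simp [IsKRCanonical, Fin.last]

theorem isKRCanonical_cons_iff {n : ℕ} {g : Fin (s + 1) → ℕ} :
    IsKRCanonical (k + 1) (r + 1) (s + 1) (Fin.cons n g) ↔
      g 0 < n - n / (r + 1) ∧ IsKRCanonical k r s g := by
  simp only [IsKRCanonical, Fin.forall_fin_succ, Fin.cons_succ, Fin.castSucc_zero, Fin.cons_zero,
    Fin.val_zero, Nat.sub_zero, ← Fin.succ_castSucc, Fin.val_succ, ← Fin.succ_last,
    Nat.add_sub_add_right, Nat.add_lt_add_iff_right]
  tauto

theorem krSum_zero (f : Fin 1 → ℕ) : krSum k r 0 f = turanCount (f 0) k r := by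
  simp [krSum]

theorem krSum_cons (n : ℕ) (g : Fin (s + 1) → ℕ) :
    krSum (k + 1) (r + 1) (s + 1) (Fin.cons n g) =
      turanCount n (k + 1) (r + 1) + krSum k r s g := by
  simp [krSum, Fin.sum_univ_succ]

theorem turanCount_head_le_krSum (f : Fin (s + 1) → ℕ) : turanCount (f 0) k r ≤ krSum k r s f :=
  single_le_sum (f := fun i : Fin (s + 1) => turanCount (f i) (k - i) (r - i))
    (fun _ _ => Nat.zero_le _) (mem_univ 0)

theorem krSum_pos (hkr : k ≤ r) {f : Fin (s + 1) → ℕ} (hf : IsKRCanonical k r s f) :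
    0 < krSum k r s f := by
  induction s generalizing k r with
  | zero =>
    obtain ⟨-, hkf⟩ := isKRCanonical_zero_iff.1 hf
    exact krSum_zero f ▸ turanCount_pos hkf hkr
  | succ s ih =>
    obtain ⟨k, rfl⟩ := Nat.exists_eq_add_one.2 (Nat.zero_lt_of_lt hf.1)
    obtain ⟨r, rfl⟩ := Nat.exists_eq_add_one.2 (Nat.zero_lt_of_lt hkr)
    cases f using Fin.consCases with
    | cons n g =>
      rw [krSum_cons]
      have := ih (by omega) (isKRCanonical_cons_iff.1 hf).2
      omega

theorem krSum_lt_turanCount_head_succ (hkr : k ≤ r) {f : Fin (s + 1) → ℕ}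
    (hf : IsKRCanonical k r s f) : krSum k r s f < turanCount (f 0 + 1) k r := by
  induction s generalizing k r with
  | zero =>
    obtain ⟨hk, hkf⟩ := isKRCanonical_zero_iff.1 hf
    exact krSum_zero f ▸ turanCount_lt_succ hk hkr hkf
  | succ s ih =>
    obtain ⟨k, rfl⟩ := Nat.exists_eq_add_one.2 (Nat.zero_lt_of_lt hf.1)
    obtain ⟨r, rfl⟩ := Nat.exists_eq_add_one.2 (Nat.zero_lt_of_lt hkr)
    cases f using Fin.consCases with
    | cons n g =>
      obtain ⟨hg0, hg⟩ := isKRCanonical_cons_iff.1 hf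
      have htail := ih (by omega) hg
      have hmono : turanCount (g 0 + 1) k r ≤ turanCount (n - n / (r + 1)) k r :=
        turanCount_mono k r hg0
      rw [krSum_cons, Fin.cons_zero, turanCount_succ_succ_succ]
      omega

theorem turanCount_head_lt_krSum (hkr : k ≤ r) {f : Fin (s + 2) → ℕ}
    (hf : IsKRCanonical k r (s + 1) f) : turanCount (f 0) k r < krSum k r (s + 1) f := by
  obtain ⟨k, rfl⟩ := Nat.exists_eq_add_one.2 (Nat.zero_lt_of_lt hf.1)
  obtain ⟨r, rfl⟩ := Nat.exists_eq_add_one.2 (Nat.zero_lt_of_lt hkr)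
  cases f using Fin.consCases with
  | cons n g =>
    rw [krSum_cons, Fin.cons_zero]
    have := krSum_pos (by omega) (isKRCanonical_cons_iff.1 hf).2
    omega

theorem IsKRCanonical.head_eq (hkr : k ≤ r) {t : ℕ} {f : Fin (s + 1) → ℕ} {g : Fin (t + 1) → ℕ}
    (hf : IsKRCanonical k r s f) (hg : IsKRCanonical k r t g) (h : krSum k r s f = krSum k r t g) :
    f 0 = g 0 :=
  (turanCount_mono k r).eq_of_le_of_lt_succ (turanCount_head_le_krSum f)
    (krSum_lt_turanCount_head_succ hkr hf) (h ▸ turanCount_head_le_krSum g)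
    (h ▸ krSum_lt_turanCount_head_succ hkr hg)

theorem IsKRCanonical.eq_of_krSum_eq (hkr : k ≤ r) {t : ℕ} {f : Fin (s + 1) → ℕ}
    {g : Fin (t + 1) → ℕ} (hf : IsKRCanonical k r s f) (hg : IsKRCanonical k r t g)
    (h : krSum k r s f = krSum k r t g) : (⟨s, f⟩ : Σ s, Fin (s + 1) → ℕ) = ⟨t, g⟩ := by
  have hhead := hf.head_eq hkr hg h
  induction s generalizing k r t with
  | zero =>
    cases t with
    | zero => exact Sigma.ext rfl (heq_of_eq (funext fun i => Fin.fin_one_eq_zero i ▸ hhead))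
    | succ t =>
      rw [krSum_zero, hhead] at h
      exact absurd h (turanCount_head_lt_krSum hkr hg).ne
  | succ s ih =>
    cases t with
    | zero =>
      rw [krSum_zero, ← hhead] at h
      exact absurd h.symm (turanCount_head_lt_krSum hkr hf).ne
    | succ t =>
      obtain ⟨k, rfl⟩ := Nat.exists_eq_add_one.2 (Nat.zero_lt_of_lt hf.1)
      obtain ⟨r, rfl⟩ := Nat.exists_eq_add_one.2 (Nat.zero_lt_of_lt hkr)
      cases f using Fin.consCases with | cons n f => ?_
      cases g using Fin.consCases with | cons n' g => ?_
      simp only [Fin.cons_zero] at hhead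
      subst hhead
      have hf' := (isKRCanonical_cons_iff.1 hf).2
      have hg' := (isKRCanonical_cons_iff.1 hg).2
      rw [krSum_cons, krSum_cons, Nat.add_left_cancel_iff] at h
      obtain ⟨rfl, hfg⟩ :=
        Sigma.mk.inj_iff.1 (ih (by omega) hf' hg' h (hf'.head_eq (by omega) hg' h))
      rw [eq_of_heq hfg]

end KRCanonical

theorem exists_isKRCanonical_krSum_eq {m k r : ℕ} (hm : 0 < m) (hk : 0 < k) (hkr : k ≤ r) :
    ∃ s f, IsKRCanonical k r s f ∧ krSum k r s f = m := by
  induction k generalizing r m with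
  | zero => exact absurd hk (lt_irrefl 0)
  | succ k ih =>
    obtain ⟨r, rfl⟩ := Nat.exists_eq_add_one.2 (Nat.zero_lt_of_lt hkr)
    obtain ⟨n, hn, hn'⟩ := exists_le_lt_succ (φ := (turanCount · (k + 1) (r + 1)))
      ((turanCount_eq_zero_of_lt (Nat.succ_pos k)).trans_le (Nat.zero_le m))
      ((Nat.lt_succ_self m).trans_le (le_turanCount_add (Nat.succ_pos k) hkr (m + 1)))
    rw [turanCount_succ_succ_succ] at hn'
    rcases hn.eq_or_lt with hmn | hmn
    · refine ⟨0, fun _ => n, isKRCanonical_zero_iff.2 ⟨Nat.succ_pos k, ?_⟩, by rw [krSum_zero, hmn]⟩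
      by_contra h
      rw [turanCount_eq_zero_of_lt (not_le.1 h)] at hmn
      omega
    · obtain rfl | hk := Nat.eq_zero_or_pos k
      · rw [turanCount_zero_right] at hn'
        omega
      obtain ⟨s, g, hg, hgm⟩ :=
        ih (m := m - turanCount n (k + 1) (r + 1)) (r := r) (by omega) hk (by omega)
      refine ⟨s + 1, Fin.cons n g, isKRCanonical_cons_iff.2 ⟨?_, hg⟩, ?_⟩
      · by_contra h
        have : turanCount (n - n / (r + 1)) k r ≤ krSum k r s g :=
          (turanCount_mono k r (not_lt.1 h)).trans (turanCount_head_le_krSum g)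
        omega
      · rw [krSum_cons, hgm]
        omega

/-- Given positive integers `m`, `k`, `r` with `r ≥ k`, there are unique `s` and
`n_k, n_{k-1}, …, n_{k-s}` (encoded as `f : Fin (s+1) → ℕ` with `f i = n_{k-i}`) such that
`m = T(n_k, k, r) + T(n_{k-1}, k-1, r-1) + ⋯ + T(n_{k-s}, k-s, r-s)`, where
`n_{k-i} - ⌊n_{k-i}/(r-i)⌋ > n_{k-i-1}` for all `0 ≤ i < s` and `n_{k-s} ≥ k - s > 0`. -/
theorem krCanonical_exists_unique (m k r : ℕ) (hm : 0 < m) (hk : 0 < k) (hkr : k ≤ r) :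
    ∃! sf : Σ s : ℕ, Fin (s + 1) → ℕ,
      sf.1 < k ∧
      (∀ i : Fin sf.1, sf.2 i.succ < sf.2 i.castSucc - sf.2 i.castSucc / (r - (i : ℕ))) ∧
      k - sf.1 ≤ sf.2 (Fin.last sf.1) ∧
      m = ∑ i : Fin (sf.1 + 1), turanCount (sf.2 i) (k - (i : ℕ)) (r - (i : ℕ)) := by
  obtain ⟨s, f, hf, rfl⟩ := exists_isKRCanonical_krSum_eq hm hk hkr
  refine ⟨⟨s, f⟩, ⟨hf.1, hf.2.1, hf.2.2, rfl⟩, ?_⟩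
  rintro ⟨t, g⟩ ⟨hts, hchain, hlast, hsum⟩
  exact IsKRCanonical.eq_of_krSum_eq hkr ⟨hts, hchain, hlast⟩ hf hsum.symm
end

section
/- If G is a finite simple graph on n vertices with no clique on r+1 vertices, then for every i the number of i-vertex cliques of G is at most the number of i-vertex cliques of the Turán graph T_{n,r}. -/
/-!
Zykov's argument, by induction on `r`. Pick a vertex `v` whose neighbourhood `N(v)` contains
the most `i`-cliques. An `(i+1)`-clique either lies in `N(v)`, which spans no `K_r`, or passes
through some `u ∉ N(v)`; those through `u` correspond to the `i`-cliques in `N(u)`, of which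
there are at most as many as in `N(v)`. Hence
`c_{i+1}(G) ≤ c_{i+1}(N(v)) + (n - |N(v)|) c_i(N(v))`, which by induction is at most the
elementary symmetric function `e_{i+1}` of the part sizes of `T_{|N(v)|,r}` together with one
extra part of size `n - |N(v)|`. Clique counts of complete multipartite graphs are exactly
these elementary symmetric functions, and among part sizes with fixed number and sum they are
maximised by the balanced ones, i.e. by `T_{n,r+1}`.
-/

open Finset

namespace Multiset

variable {R : Type*} [CommSemiring R]

@[simp] lemma esymm_zero (s : Multiset R) : s.esymm 0 = 1 := by simp [esymm]

lemma esymm_cons_succ (a : R) (s : Multiset R) (n : ℕ) :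
    (a ::ₘ s).esymm (n + 1) = s.esymm (n + 1) + a * s.esymm n := by
  simp [esymm, map_map, sum_map_mul_left]

lemma esymm_cons_cons_le_of_le {a b : ℕ} (h : b ≤ a) (u : Multiset ℕ) (n : ℕ) :
    ((a + 1) ::ₘ b ::ₘ u).esymm n ≤ (a ::ₘ (b + 1) ::ₘ u).esymm n := by
  rcases n with _ | _ | n
  · simp
  · simp only [esymm_cons_succ, esymm_zero]
    omega
  · simp only [esymm_cons_succ]
    have : (a + 1) * b ≤ a * (b + 1) := by nlinarith
    nlinarith [Nat.mul_le_mul_right (u.esymm n) this]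

def IsBalanced (s : Multiset ℕ) : Prop := ∀ x ∈ s, ∀ y ∈ s, x ≤ y + 1

lemma IsBalanced.eq_replicate {s : Multiset ℕ} (hs : s.IsBalanced) (h0 : s ≠ 0) :
    s = replicate (card s - s.sum % card s) (s.sum / card s) +
      replicate (s.sum % card s) (s.sum / card s + 1) := by
  obtain ⟨m, hm, hmin⟩ := s.toFinset.exists_min_image id (by simpa using h0)
  simp only [mem_toFinset, id] at hm hmin
  have hdich : ∀ x ∈ s, x = m ∨ x = m + 1 := fun x hx => by
    have := hmin x hx; have := hs x hx m hm; omega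
  have hsplit : s = replicate (count m s) m + replicate (count (m + 1) s) (m + 1) := by
    conv_lhs => rw [← filter_add_not (· = m) s, filter_eq']
    rw [← filter_eq' s (m + 1)]
    congr 1
    exact filter_congr fun x hx => by rcases hdich x hx with rfl | rfl <;> simp
  have hpos : 0 < count m s := count_pos.2 hm
  set c := count (m + 1) s
  have hcard : card s = count m s + c := by conv_lhs => rw [hsplit]; simp
  have hsum : s.sum = c + card s * m := by
    conv_lhs => rw [hsplit]
    simp only [sum_add, sum_replicate, smul_eq_mul, hcard]; ring
  obtain ⟨hdiv, hmod⟩ := (Nat.div_mod_unique (by omega)).2 ⟨hsum.symm, by omega⟩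
  rw [hdiv, hmod, hcard, Nat.add_sub_cancel]
  exact hsplit

lemma IsBalanced.eq_of_card_eq_of_sum_eq {s t : Multiset ℕ} (hs : s.IsBalanced)
    (ht : t.IsBalanced) (hcard : card s = card t) (hsum : s.sum = t.sum) : s = t := by
  rcases eq_or_ne s 0 with rfl | h0
  · exact (card_eq_zero.1 (by simpa using hcard.symm)).symm
  · have ht0 : t ≠ 0 := by rintro rfl; simp_all
    rw [hs.eq_replicate h0, ht.eq_replicate ht0, hcard, hsum]

/-- Moving a unit from a part to one smaller by at least two does not decrease `esymm` and
strictly decreases the sum of squares, and the only balanced multiset is `t`. -/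
theorem esymm_le_esymm_of_isBalanced {s t : Multiset ℕ} (ht : t.IsBalanced)
    (hcard : card s = card t) (hsum : s.sum = t.sum) (n : ℕ) : s.esymm n ≤ t.esymm n := by
  induction hq : (s.map (· ^ 2)).sum using Nat.strong_induction_on generalizing s with
  | _ q ih =>
  by_cases hs : s.IsBalanced
  · rw [hs.eq_of_card_eq_of_sum_eq ht hcard hsum]
  obtain ⟨x, hx, b, hb, hbx⟩ : ∃ x ∈ s, ∃ b ∈ s, b + 1 < x := by
    simpa [IsBalanced] using hs
  obtain ⟨a, rfl⟩ : ∃ a, x = a + 1 := ⟨x - 1, by omega⟩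
  obtain ⟨s', rfl⟩ := exists_cons_of_mem hx
  obtain ⟨u, rfl⟩ := exists_cons_of_mem ((mem_cons.1 hb).resolve_left (by omega))
  calc ((a + 1) ::ₘ b ::ₘ u).esymm n
      ≤ (a ::ₘ (b + 1) ::ₘ u).esymm n := esymm_cons_cons_le_of_le (by omega) u n
    _ ≤ t.esymm n := by
      refine ih _ ?_ (by simpa using hcard) (by simp at hsum ⊢; omega) rfl
      rw [← hq]
      simp only [map_cons, sum_cons]
      nlinarith

end Multiset

namespace SimpleGraph

variable {V : Type*} [Fintype V] [DecidableEq V] (G : SimpleGraph V) [DecidableRel G.Adj]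

def cliquesIn (A : Finset V) (n : ℕ) : Finset (Finset V) := {s ∈ G.cliqueFinset n | s ⊆ A}

variable {G} {A B : Finset V} {n : ℕ}

@[simp] lemma mem_cliquesIn {s : Finset V} :
    s ∈ G.cliquesIn A n ↔ G.IsNClique n s ∧ s ⊆ A := by
  simp [cliquesIn]

variable (G)

lemma cliquesIn_univ (n : ℕ) : G.cliquesIn univ n = G.cliqueFinset n := by
  ext; simp

lemma card_cliquesIn_zero (A : Finset V) : #(G.cliquesIn A 0) = 1 :=
  card_eq_one.2 ⟨∅, by ext; simp +contextual⟩

lemma cliquesIn_empty_succ (n : ℕ) : G.cliquesIn ∅ (n + 1) = ∅ := by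
  ext s; simp only [mem_cliquesIn, subset_empty, notMem_empty, iff_false, not_and]
  rintro h rfl; simpa using h.card_eq

lemma eq_empty_of_cliquesIn_one_eq_empty (h : G.cliquesIn A 1 = ∅) : A = ∅ := by
  refine eq_empty_of_forall_notMem fun v hv => ?_
  have : {v} ∈ G.cliquesIn A 1 := by simpa using hv
  simp [h] at this

lemma card_cliquesIn_succ_filter_mem {u : V} (hu : u ∈ A) (n : ℕ) :
    #{s ∈ G.cliquesIn A (n + 1) | u ∈ s} = #(G.cliquesIn (G.neighborFinset u ∩ A) n) := by
  refine card_bij' (fun s _ => s.erase u) (fun s _ => insert u s) ?_ ?_ ?_ ?_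
  · simp only [mem_filter, mem_cliquesIn, and_imp]
    intro s hs hsA hus
    refine ⟨hs.erase_of_mem hus, fun x hx => ?_⟩
    have hxs := mem_of_mem_erase hx
    simpa [hsA hxs] using hs.isClique hus hxs (ne_of_mem_erase hx).symm
  · simp only [mem_filter, mem_cliquesIn, subset_inter_iff, and_imp]
    intro s hs hsN hsA
    exact ⟨⟨hs.insert fun b hb => by simpa using hsN hb, insert_subset hu hsA⟩,
      mem_insert_self _ _⟩
  · intro s hs
    exact insert_erase (mem_filter.1 hs).2
  · intro s hs
    refine erase_insert fun hus => ?_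
    simpa using (mem_cliquesIn.1 hs).2 hus

variable {G} in
lemma cliquesIn_neighborFinset_inter_eq_empty {v : V} (hv : v ∈ A)
    (h : G.cliquesIn A (n + 1) = ∅) : G.cliquesIn (G.neighborFinset v ∩ A) n = ∅ := by
  rw [← card_eq_zero, ← G.card_cliquesIn_succ_filter_mem hv, h, filter_empty, card_empty]

lemma cliquesIn_eq_union_biUnion (hBA : B ⊆ A) (n : ℕ) :
    G.cliquesIn A n =
      G.cliquesIn B n ∪ (A \ B).biUnion fun u => {s ∈ G.cliquesIn A n | u ∈ s} := by
  ext s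
  simp only [mem_union, mem_biUnion, mem_filter, mem_cliquesIn, mem_sdiff]
  constructor
  · rintro ⟨hs, hsA⟩
    by_cases hsB : s ⊆ B
    · exact .inl ⟨hs, hsB⟩
    · obtain ⟨u, hus, huB⟩ := not_subset.1 hsB
      exact .inr ⟨u, ⟨hsA hus, huB⟩, ⟨hs, hsA⟩, hus⟩
  · rintro (⟨hs, hsB⟩ | ⟨u, -, hs, -⟩)
    exacts [⟨hs, hsB.trans hBA⟩, hs]

lemma card_cliquesIn_succ_le (hBA : B ⊆ A) (n : ℕ) :
    #(G.cliquesIn A (n + 1)) ≤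
      #(G.cliquesIn B (n + 1)) + ∑ u ∈ A \ B, #(G.cliquesIn (G.neighborFinset u ∩ A) n) := by
  rw [G.cliquesIn_eq_union_biUnion hBA]
  refine (card_union_le _ _).trans (Nat.add_le_add_left (card_biUnion_le.trans_eq ?_) _)
  exact sum_congr rfl fun u hu => G.card_cliquesIn_succ_filter_mem (mem_sdiff.1 hu).1 n

/-- A clique meets the independent set `A \ B` at most once, so the union is disjoint. -/
lemma card_cliquesIn_succ_of_isIndepSet (hBA : B ⊆ A) (hind : G.IsIndepSet ↑(A \ B)) (n : ℕ) :
    #(G.cliquesIn A (n + 1)) =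
      #(G.cliquesIn B (n + 1)) + ∑ u ∈ A \ B, #(G.cliquesIn (G.neighborFinset u ∩ A) n) := by
  rw [G.cliquesIn_eq_union_biUnion hBA, card_union_of_disjoint, card_biUnion]
  · exact congrArg _ <|
      sum_congr rfl fun u hu => G.card_cliquesIn_succ_filter_mem (mem_sdiff.1 hu).1 n
  · intro u hu w hw huw
    refine disjoint_filter.2 fun s hs hus hws => hind hu hw huw ?_
    exact (mem_cliquesIn.1 hs).1.isClique hus hws huw
  · refine Finset.disjoint_left.2 fun s hsB hsA => ?_
    obtain ⟨u, hu, hus⟩ := mem_biUnion.1 hsA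
    exact (mem_sdiff.1 hu).2 ((mem_cliquesIn.1 hsB).2 (mem_filter.1 hus).2)

def turanParts (n r : ℕ) : Multiset ℕ := (range r).val.map fun j => #{v : Fin n | ↑v % r = j}

lemma card_filter_val_mod_eq {n r j : ℕ} (hj : j < r) :
    #{v : Fin n | ↑v % r = j} = n / r + if j < n % r then 1 else 0 := by
  have hval : ({v : Fin n | ↑v % r = j} : Finset _).map Fin.valEmbedding =
      {x ∈ range n | x ≡ j [MOD r]} := by
    ext x
    simp only [mem_map, mem_filter, mem_univ, true_and, Fin.valEmbedding_apply, mem_range,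
      Nat.ModEq, Nat.mod_eq_of_lt hj]
    exact ⟨by rintro ⟨v, hv, rfl⟩; exact ⟨v.2, hv⟩,
      fun ⟨hx, hxj⟩ => ⟨⟨x, hx⟩, hxj, rfl⟩⟩
  rw [← card_map, hval, ← Nat.count_eq_card_filter_range, Nat.count_modEq_card n (by omega),
    Nat.mod_eq_of_lt hj]

@[simp] lemma card_turanParts (n r : ℕ) : Multiset.card (turanParts n r) = r := by
  simp [turanParts]

lemma sum_turanParts {n r : ℕ} (hr : r ≠ 0) : (turanParts n r).sum = n := by
  rw [turanParts, sum_map_val,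
    ← card_eq_sum_card_fiberwise fun v _ => mem_range.2 (Nat.mod_lt _ (Nat.pos_of_ne_zero hr)),
    card_univ, Fintype.card_fin]

lemma isBalanced_turanParts (n r : ℕ) : (turanParts n r).IsBalanced := by
  simp only [Multiset.IsBalanced, turanParts, Multiset.mem_map, mem_val, mem_range,
    forall_exists_index, and_imp]
  rintro _ j hj rfl _ k hk rfl
  rw [card_filter_val_mod_eq hj, card_filter_val_mod_eq hk]
  split_ifs <;> omega

/-- Adjoining one residue class to `T` adds an independent set joined to all of the rest. -/
lemma card_cliquesIn_turanGraph (n r : ℕ) (T : Finset ℕ) (i : ℕ) :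
    #((turanGraph n r).cliquesIn {v | ↑v % r ∈ T} i) =
      (T.val.map fun j => #{v : Fin n | ↑v % r = j}).esymm i := by
  induction T using Finset.induction_on generalizing i with
  | empty =>
    rcases i with _ | i
    · simp [card_cliquesIn_zero]
    · simp [cliquesIn_empty_succ, Multiset.esymm, Multiset.powersetCard_zero_right]
  | @insert j T hj ih =>
    rcases i with _ | i
    · simp [card_cliquesIn_zero]
    have hsub :
        ({v | ↑v % r ∈ T} : Finset (Fin n)) ⊆ ({v | ↑v % r ∈ insert j T} : Finset _) :=
      fun v => by simp +contextual
    have hsdiff : ({v | ↑v % r ∈ insert j T} : Finset (Fin n)) \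
        ({v | ↑v % r ∈ T} : Finset (Fin n)) = ({v | ↑v % r = j} : Finset (Fin n)) := by
      ext v; simp only [mem_sdiff, mem_filter, mem_univ, true_and, mem_insert]
      constructor
      · rintro ⟨h | h, h'⟩; exacts [h, absurd h h']
      · rintro rfl; exact ⟨.inl rfl, hj⟩
    have hind : (turanGraph n r).IsIndepSet ↑({v | ↑v % r = j} : Finset (Fin n)) := by
      intro v hv w hw _ hadj
      simp only [coe_filter, mem_univ, true_and, Set.mem_ofPred_eq] at hv hw
      exact (turanGraph_adj.1 hadj) (hv.trans hw.symm)
    have hnbr : ∀ u : Fin n, ↑u % r = j →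
        (turanGraph n r).neighborFinset u ∩ ({v | ↑v % r ∈ insert j T} : Finset (Fin n)) =
          ({v | ↑v % r ∈ T} : Finset (Fin n)) := by
      intro u hu
      ext v
      simp only [mem_inter, mem_neighborFinset, turanGraph_adj, mem_filter, mem_univ, true_and,
        mem_insert, hu]
      constructor
      · rintro ⟨hne, h | h⟩; exacts [absurd h.symm hne, h]
      · intro h; exact ⟨fun hjv => hj (hjv ▸ h), .inr h⟩
    rw [card_cliquesIn_succ_of_isIndepSet _ hsub (hsdiff ▸ hind), hsdiff,
      sum_congr rfl fun u hu => by rw [hnbr u (mem_filter.1 hu).2], sum_const, smul_eq_mul,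
      insert_val_of_notMem hj, Multiset.map_cons, Multiset.esymm_cons_succ, ih, ih]

lemma card_cliqueFinset_turanGraph {n r : ℕ} (hr : 0 < r) (i : ℕ) :
    #((turanGraph n r).cliqueFinset i) = (turanParts n r).esymm i := by
  have huniv : ({v | ↑v % r ∈ range r} : Finset (Fin n)) = univ :=
    filter_true_of_mem fun v _ => mem_range.2 (Nat.mod_lt _ hr)
  rw [← cliquesIn_univ, ← huniv, card_cliquesIn_turanGraph, turanParts]

lemma card_cliqueFinset_turanGraph_zero (n i : ℕ) :
    #((turanGraph n 0).cliqueFinset i) = n.choose i := by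
  conv_rhs => rw [← Fintype.card_fin n, ← card_univ, ← card_powersetCard]
  congr 1
  ext s
  simp [isNClique_iff, IsClique.top]

theorem card_cliquesIn_le_esymm_turanParts {r : ℕ} (hA : G.cliquesIn A (r + 1) = ∅) (i : ℕ) :
    #(G.cliquesIn A i) ≤ (turanParts #A r).esymm i := by
  induction r generalizing A i with
  | zero =>
    rcases i with _ | i
    · simp [card_cliquesIn_zero]
    · simp [G.eq_empty_of_cliquesIn_one_eq_empty hA, cliquesIn_empty_succ]
  | succ r ih =>
    rcases i with _ | i
    · simp [card_cliquesIn_zero]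
    rcases A.eq_empty_or_nonempty with rfl | hAne
    · simp [cliquesIn_empty_succ]
    obtain ⟨v, hv, hmax⟩ :=
      A.exists_max_image (fun u => #(G.cliquesIn (G.neighborFinset u ∩ A) i)) hAne
    set B := G.neighborFinset v ∩ A
    have hBA : B ⊆ A := inter_subset_right
    have hB : G.cliquesIn B (r + 1) = ∅ := cliquesIn_neighborFinset_inter_eq_empty hv hA
    have hsumB : (turanParts #B r).sum = #B := by
      rcases eq_or_ne r 0 with rfl | hr
      · simp [G.eq_empty_of_cliquesIn_one_eq_empty hB, turanParts]
      · exact sum_turanParts hr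
    calc #(G.cliquesIn A (i + 1))
        ≤ #(G.cliquesIn B (i + 1)) +
            ∑ u ∈ A \ B, #(G.cliquesIn (G.neighborFinset u ∩ A) i) :=
          G.card_cliquesIn_succ_le hBA i
      _ ≤ #(G.cliquesIn B (i + 1)) + (#A - #B) * #(G.cliquesIn B i) := by
          rw [← card_sdiff_of_subset hBA, ← smul_eq_mul]
          gcongr
          exact sum_le_card_nsmul _ _ _ fun u hu => hmax u (mem_sdiff.1 hu).1
      _ ≤ (turanParts #B r).esymm (i + 1) + (#A - #B) * (turanParts #B r).esymm i := by
          gcongr <;> exact ih hB _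
      _ = ((#A - #B) ::ₘ turanParts #B r).esymm (i + 1) := (Multiset.esymm_cons_succ ..).symm
      _ ≤ (turanParts #A (r + 1)).esymm (i + 1) := by
          refine Multiset.esymm_le_esymm_of_isBalanced (isBalanced_turanParts _ _) (by simp) ?_ _
          rw [Multiset.sum_cons, hsumB, sum_turanParts r.succ_ne_zero,
            Nat.sub_add_cancel (card_le_card hBA)]

end SimpleGraph

/-- Zykov's bound: if `G` is a finite simple graph on `n` vertices with no clique on `r+1`
vertices, then for every `i` the number of `i`-vertex cliques of `G` is at most the number
of `i`-vertex cliques of the Turán graph `T_{n,r}`. -/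
theorem card_cliques_le_turan {V : Type*} [Fintype V] [DecidableEq V]
    (G : SimpleGraph V) [DecidableRel G.Adj] (n r : ℕ)
    (hn : Fintype.card V = n) (hG : G.CliqueFree (r + 1)) (i : ℕ) :
    (G.cliqueFinset i).card ≤ ((SimpleGraph.turanGraph n r).cliqueFinset i).card := by
  subst hn
  rcases Nat.eq_zero_or_pos r with rfl | hr
  · exact G.card_cliqueFinset_le.trans_eq
      (SimpleGraph.card_cliqueFinset_turanGraph_zero _ i).symm
  have hA : G.cliquesIn univ (r + 1) = ∅ := by
    rwa [SimpleGraph.cliquesIn_univ, SimpleGraph.cliqueFinset_eq_empty_iff]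
  rw [SimpleGraph.card_cliqueFinset_turanGraph hr, ← G.cliquesIn_univ, ← card_univ]
  exact G.card_cliquesIn_le_esymm_turanParts hA i
end
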